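/- Let x1, x0 be Bessel sequences in X and u0 a Bessel sequence in U with synthesis operators Ξ1, Ξ0, Υ0, and suppose the data-generation assumption holds. Assume dim U < ∞ and fix γ ∈ (0,1). Then the following are equivalent. (i) The data (x1,x0,u0) are informative for stabilization with decay rate γ, and there exists c ≥ 0 such that Ξ0*Ξ0 ≤ c² (Ξ0*Ξ0)² as operators on ℓ²(ℕ). (ii) The sequence x0 is a frame for X, and there exists a right inverse Ξ0† ∈ L(X, ℓ²(ℕ)) of Ξ0 (Ξ0 Ξ0† = I) such that Ξ1 Ξ0† is power stable with decay rate γ. -/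

import Mathlib

/-!
Consistency of `(A, B)` with the data means `A Ξ0 + B Υ0 = Ξ1`. If the closed loop `A + B K` is
bounded over all consistent pairs, then `Δ + Γ K = 0` whenever `Δ Ξ0 + Γ Υ0 = 0`, since otherwise
the closed loop would grow without bound along the direction `(Δ, Γ)`; on rank-one `Δ, Γ` this
reads `Ξ0* p + Υ0* q = 0 → p + K* q = 0`. In particular `Ξ0*` is injective, so `Ξ0` has dense
range and the positivity condition `‖Ξ0 w‖ ≤ c ‖Ξ0* Ξ0 w‖` extends to `‖y‖ ≤ c ‖Ξ0* y‖`: `x0` is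
a frame and `Ξ0 Ξ0*` is invertible, which yields a right inverse of `Ξ0`. Correcting it by a map
into `ker Ξ0` gives a right inverse `Ξd` with `Υ0 Ξd = K`, and then `Ξ1 Ξd = As + Bs K`.
Conversely, for `K := Υ0 Ξd` every consistent pair has closed loop `A + B K = Ξ1 Ξd`.
-/

noncomputable section
open ContinuousLinearMap

/-- `ℓ²(ℕ)`: the Hilbert space of square-summable complex sequences. -/
abbrev l2 : Type := lp (fun _ : ℕ => ℂ) 2

/-- `η` is a Bessel sequence in `Y`. -/
def Bessel {Y : Type} [NormedAddCommGroup Y] [InnerProductSpace ℂ Y] (η : ℕ → Y) : Prop :=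
  ∃ α : ℝ, 0 < α ∧ ∀ y : Y, ∑' k : ℕ, ‖(inner ℂ y (η k) : ℂ)‖ ^ 2 ≤ α * ‖y‖ ^ 2

/-- `η` is a frame for `Y`. -/
def IsFrame {Y : Type} [NormedAddCommGroup Y] [InnerProductSpace ℂ Y] (η : ℕ → Y) : Prop :=
  ∃ α β : ℝ, 0 < α ∧ 0 < β ∧ ∀ y : Y,
    β * ‖y‖ ^ 2 ≤ ∑' k : ℕ, ‖(inner ℂ y (η k) : ℂ)‖ ^ 2 ∧
      ∑' k : ℕ, ‖(inner ℂ y (η k) : ℂ)‖ ^ 2 ≤ α * ‖y‖ ^ 2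

/-- `T` is the synthesis operator associated with `η`: `T w = ∑ₖ wₖ • ηₖ`. -/
def IsSynthesis {Y : Type} [NormedAddCommGroup Y] [InnerProductSpace ℂ Y] (η : ℕ → Y)
    (T : l2 →L[ℂ] Y) : Prop :=
  ∀ w : l2, HasSum (fun k : ℕ => w k • η k) (T w)

section Synthesis

variable {Y : Type} [NormedAddCommGroup Y] [InnerProductSpace ℂ Y] {η : ℕ → Y} {T : l2 →L[ℂ] Y}

lemma IsSynthesis.apply_single (hT : IsSynthesis η T) (k : ℕ) : T (lp.single 2 k 1) = η k := by
  refine (hT _).unique ?_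
  convert hasSum_ite_eq k (η k) using 2 with j
  rcases eq_or_ne j k with rfl | h <;> simp [*]

variable [CompleteSpace Y]

lemma IsSynthesis.adjoint_apply (hT : IsSynthesis η T) (y : Y) (k : ℕ) :
    adjoint T y k = inner ℂ (η k) y := by
  rw [← hT.apply_single, ← adjoint_inner_right, lp.inner_single_left]
  simp

lemma IsSynthesis.tsum_norm_inner_sq (hT : IsSynthesis η T) (y : Y) :
    ∑' k, ‖(inner ℂ y (η k) : ℂ)‖ ^ 2 = ‖adjoint T y‖ ^ 2 := by
  have h := lp.norm_rpow_eq_tsum (p := 2) (by norm_num) (adjoint T y)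
  simp only [ENNReal.toReal_ofNat, Real.rpow_ofNat, hT.adjoint_apply] at h
  simp_rw [h, ← norm_inner_symm]

lemma IsSynthesis.isFrame_iff (hT : IsSynthesis η T) :
    IsFrame η ↔ ∃ c : ℝ, ∀ y, ‖y‖ ^ 2 ≤ c ^ 2 * ‖adjoint T y‖ ^ 2 := by
  simp_rw [IsFrame, hT.tsum_norm_inner_sq]
  constructor
  · rintro ⟨_, β, _, hβ, h⟩
    refine ⟨√β⁻¹, fun y => ?_⟩
    rw [Real.sq_sqrt (by positivity), ← div_eq_inv_mul, le_div_iff₀ hβ, mul_comm]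
    exact (h y).1
  · rintro ⟨c, hc⟩
    refine ⟨‖adjoint T‖ ^ 2 + 1, (c ^ 2 + 1)⁻¹, by positivity, by positivity, fun y => ⟨?_, ?_⟩⟩
    · rw [← div_eq_inv_mul, div_le_iff₀ (by positivity)]
      nlinarith [hc y, sq_nonneg ‖adjoint T y‖]
    · nlinarith [(adjoint T).le_opNorm y, norm_nonneg (adjoint T y), sq_nonneg ‖y‖]

end Synthesis

lemma comp_add_comp_eq_iff_of_isSynthesis {X U : Type} [NormedAddCommGroup X]
    [InnerProductSpace ℂ X] [NormedAddCommGroup U] [InnerProductSpace ℂ U]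
    {x1 x0 : ℕ → X} {u0 : ℕ → U} {Ξ1 Ξ0 : l2 →L[ℂ] X} {Υ0 : l2 →L[ℂ] U}
    (hΞ1 : IsSynthesis x1 Ξ1) (hΞ0 : IsSynthesis x0 Ξ0) (hΥ0 : IsSynthesis u0 Υ0)
    (A : X →L[ℂ] X) (B : U →L[ℂ] X) :
    A ∘L Ξ0 + B ∘L Υ0 = Ξ1 ↔ ∀ k, x1 k = A (x0 k) + B (u0 k) := by
  constructor
  · intro h k
    simpa [hΞ1.apply_single, hΞ0.apply_single, hΥ0.apply_single]
      using congr($h (lp.single 2 k 1)).symm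
  · intro h
    ext w
    refine (((hΞ0 w).mapL A).add ((hΥ0 w).mapL B)).unique ?_
    simpa [h, smul_add] using hΞ1 w

section Operators

variable {𝕜 : Type*} [RCLike 𝕜] {H X U : Type*}
  [NormedAddCommGroup H] [NormedAddCommGroup X] [NormedAddCommGroup U]

lemma eq_zero_of_forall_norm_add_smul_le {E : Type*} [NormedAddCommGroup E] [NormedSpace 𝕜 E]
    (F R : E) (C : ℝ) (h : ∀ n : ℕ, ‖F + (n : 𝕜) • R‖ ≤ C) : R = 0 := by
  by_contra hR
  obtain ⟨n, hn⟩ := exists_nat_gt ((C + ‖F‖) / ‖R‖)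
  have hle : n * ‖R‖ ≤ C + ‖F‖ := by
    calc n * ‖R‖ = ‖(n : 𝕜) • R‖ := by rw [norm_smul, RCLike.norm_natCast]
      _ = ‖(F + (n : 𝕜) • R) - F‖ := by rw [add_sub_cancel_left]
      _ ≤ ‖F + (n : 𝕜) • R‖ + ‖F‖ := norm_sub_le _ _
      _ ≤ C + ‖F‖ := by linarith [h n]
  rw [div_lt_iff₀ (norm_pos_iff.mpr hR)] at hn
  linarith

variable [NormedSpace 𝕜 H] [NormedSpace 𝕜 X] [NormedSpace 𝕜 U]

/-- `(A, B) ↦ A + B ∘ K` is affine on the solutions of `A ∘ T + B ∘ S = F`, and a bounded affine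
map is constant. -/
lemma add_comp_eq_zero_of_forall_norm_le {T : H →L[𝕜] X} {S : H →L[𝕜] U} {F : H →L[𝕜] X}
    {K : X →L[𝕜] U} {C : ℝ}
    (hbdd : ∀ (A : X →L[𝕜] X) (B : U →L[𝕜] X), A ∘L T + B ∘L S = F → ‖A + B ∘L K‖ ≤ C)
    {A₀ : X →L[𝕜] X} {B₀ : U →L[𝕜] X} (h₀ : A₀ ∘L T + B₀ ∘L S = F)
    {Δ : X →L[𝕜] X} {Γ : U →L[𝕜] X} (hΔΓ : Δ ∘L T + Γ ∘L S = 0) :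
    Δ + Γ ∘L K = 0 := by
  refine eq_zero_of_forall_norm_add_smul_le (𝕜 := 𝕜) (A₀ + B₀ ∘L K) _ C fun n => ?_
  have hsol : (A₀ + (n : 𝕜) • Δ) ∘L T + (B₀ + (n : 𝕜) • Γ) ∘L S = F := by
    simp only [add_comp, smul_comp]
    rw [← h₀, ← add_zero (A₀ ∘L T + B₀ ∘L S), ← smul_zero (n : 𝕜), ← hΔΓ, smul_add]
    abel
  refine le_of_eq_of_le (congrArg norm ?_) (hbdd _ _ hsol)
  simp only [add_comp, smul_comp, smul_add]
  abel

end Operators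

section InnerProduct

variable {𝕜 : Type*} [RCLike 𝕜] {H X U : Type*}
  [NormedAddCommGroup H] [InnerProductSpace 𝕜 H] [CompleteSpace H]
  [NormedAddCommGroup X] [InnerProductSpace 𝕜 X] [CompleteSpace X]
  [NormedAddCommGroup U] [InnerProductSpace 𝕜 U] [CompleteSpace U]

/-- Apply `h` to the rank-one maps `Δ = ⟪p, ·⟫ • z` and `Γ = ⟪q, ·⟫ • z` with `z ≠ 0`. -/
lemma add_adjoint_eq_zero_of_forall_comp_add_comp_eq_zero [Nontrivial X] {T : H →L[𝕜] X}
    {S : H →L[𝕜] U} {K : X →L[𝕜] U}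
    (h : ∀ (Δ : X →L[𝕜] X) (Γ : U →L[𝕜] X), Δ ∘L T + Γ ∘L S = 0 → Δ + Γ ∘L K = 0)
    {p : X} {q : U} (hpq : adjoint T p + adjoint S q = 0) : p + adjoint K q = 0 := by
  obtain ⟨z, hz⟩ := exists_ne (0 : X)
  set Δ : X →L[𝕜] X := (innerSL 𝕜 p).smulRight z
  set Γ : U →L[𝕜] X := (innerSL 𝕜 q).smulRight z
  have hΔΓ : Δ ∘L T + Γ ∘L S = 0 := by
    ext w
    simp [Δ, Γ, ← add_smul, ← adjoint_inner_left, ← inner_add_left, hpq]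
  have h0 := congr($(h Δ Γ hΔΓ) (p + adjoint K q))
  simpa only [add_apply, comp_apply, smulRight_apply, innerSL_apply_apply, zero_apply, Δ, Γ,
    ← adjoint_inner_left K, ← add_smul, ← inner_add_left, smul_eq_zero, hz, or_false,
    inner_self_eq_zero] using h0

lemma isPositive_sq_smul_sq_sub_iff (T : H →L[𝕜] X) (c : ℝ) :
    (((c : 𝕜) ^ 2) • (adjoint T ∘L T) ^ 2 - adjoint T ∘L T).IsPositive ↔
      ∀ w, ‖T w‖ ^ 2 ≤ c ^ 2 * ‖adjoint T (T w)‖ ^ 2 := by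
  set P := adjoint T ∘L T
  have hP : IsSelfAdjoint P := (isPositive_adjoint_comp_self T).isSelfAdjoint
  have hself : IsSelfAdjoint (((c : 𝕜) ^ 2) • P ^ 2 - P) :=
    (((show IsSelfAdjoint (c : 𝕜) from RCLike.conj_ofReal c).pow 2).smul (hP.pow 2)).sub hP
  have hinner : ∀ w, inner 𝕜 ((((c : 𝕜) ^ 2) • P ^ 2 - P) w) w =
      ((c ^ 2 * ‖adjoint T (T w)‖ ^ 2 - ‖T w‖ ^ 2 : ℝ) : 𝕜) := by
    intro w
    have hP2 : inner 𝕜 ((P ^ 2) w) w = (‖P w‖ : 𝕜) ^ 2 := by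
      rw [pow_two, mul_apply_eq_comp, ← adjoint_inner_right, hP.adjoint_eq,
        inner_self_eq_norm_sq_to_K]
    have hP1 : inner 𝕜 (P w) w = (‖T w‖ : 𝕜) ^ 2 := by
      rw [comp_apply, adjoint_inner_left, inner_self_eq_norm_sq_to_K]
    rw [sub_apply, smul_apply, inner_sub_left, inner_smul_left, hP2, hP1]
    simp [P]
  rw [isPositive_iff', and_iff_right hself]
  simp_rw [hinner, RCLike.ofReal_nonneg, sub_nonneg]

lemma denseRange_of_injective_adjoint {T : H →L[𝕜] X} (hT : Function.Injective (adjoint T)) :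
    DenseRange T := by
  change Dense (LinearMap.range (T : H →ₗ[𝕜] X) : Set X)
  rw [Submodule.dense_iff_topologicalClosure_eq_top,
    Submodule.topologicalClosure_eq_top_iff, orthogonal_range, LinearMap.ker_eq_bot]
  exact hT

lemma sq_norm_le_of_denseRange {T : H →L[𝕜] X} (hT : DenseRange T) {c : ℝ}
    (h : ∀ w, ‖T w‖ ^ 2 ≤ c ^ 2 * ‖adjoint T (T w)‖ ^ 2) (y : X) :
    ‖y‖ ^ 2 ≤ c ^ 2 * ‖adjoint T y‖ ^ 2 :=
  hT.induction_on y (isClosed_le (by fun_prop) (by fun_prop)) h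

/-- `T ∘ T†` is coercive, hence invertible, and `T† ∘ (T ∘ T†)⁻¹` is a right inverse of `T`. -/
lemma exists_comp_eq_id_of_sq_norm_le {T : H →L[𝕜] X} {c : ℝ}
    (h : ∀ y, ‖y‖ ^ 2 ≤ c ^ 2 * ‖adjoint T y‖ ^ 2) :
    ∃ W : X →L[𝕜] H, T ∘L W = ContinuousLinearMap.id 𝕜 X := by
  have hunit : IsUnit (T ∘L adjoint T) := by
    refine isUnit_of_forall_le_norm_inner_map _ (c := (‖c‖₊ ^ 2 + 1)⁻¹) (by positivity) fun y => ?_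
    rw [comp_apply, ← adjoint_inner_right, inner_self_eq_norm_sq_to_K, norm_pow, RCLike.norm_ofReal,
      abs_norm, NNReal.coe_inv, ← div_eq_mul_inv, div_le_iff₀ (by positivity)]
    push_cast
    rw [Real.norm_eq_abs, sq_abs]
    nlinarith [h y, sq_nonneg ‖adjoint T y‖]
  obtain ⟨G, hG⟩ := hunit
  refine ⟨adjoint T ∘L ↑G⁻¹, ?_⟩
  rw [← comp_assoc, ← hG]
  exact G.mul_inv

lemma adjoint_apply_adjoint_apply_of_mem_orthogonal_ker {T : H →L[𝕜] X} {W : X →L[𝕜] H}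
    (hW : T ∘L W = ContinuousLinearMap.id 𝕜 X) {v : H}
    (hv : v ∈ (LinearMap.ker (T : H →ₗ[𝕜] X))ᗮ) :
    adjoint T (adjoint W v) = v := by
  refine ext_inner_right 𝕜 fun w => ?_
  have hker : W (T w) - w ∈ LinearMap.ker (T : H →ₗ[𝕜] X) := by
    simp [← comp_apply T W, hW]
  rw [adjoint_inner_left, adjoint_inner_left, ← sub_eq_zero, ← inner_sub_right,
    Submodule.inner_left_of_mem_orthogonal hker hv]

end InnerProduct

section FiniteDimensional

variable {𝕜 : Type*} [RCLike 𝕜] {H X U : Type*}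
  [NormedAddCommGroup H] [InnerProductSpace 𝕜 H] [CompleteSpace H]
  [NormedAddCommGroup X] [InnerProductSpace 𝕜 X] [CompleteSpace X]
  [NormedAddCommGroup U] [InnerProductSpace 𝕜 U] [CompleteSpace U] [FiniteDimensional 𝕜 U]

/-- Correct a right inverse `W` of `T` by a map into `ker T` chosen so that `S` becomes `L`; the
required values `L x - S (W x)` lie in `S (ker T)` because that finite-dimensional subspace is
the annihilator of its annihilator. -/
lemma exists_comp_eq_id_and_comp_eq {T : H →L[𝕜] X} {S : H →L[𝕜] U} {L : X →L[𝕜] U}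
    {W : X →L[𝕜] H} (hW : T ∘L W = ContinuousLinearMap.id 𝕜 X)
    (h : ∀ p q, adjoint T p + adjoint S q = 0 → p + adjoint L q = 0) :
    ∃ D : X →L[𝕜] H, T ∘L D = ContinuousLinearMap.id 𝕜 X ∧ S ∘L D = L := by
  set J := LinearMap.ker (T : H →ₗ[𝕜] X)
  set SJ : J →L[𝕜] U := S ∘L J.subtypeL
  set V := LinearMap.range (SJ : J →ₗ[𝕜] U)
  have hmem : ∀ x, (L - S ∘L W) x ∈ V := by
    intro x
    rw [← Submodule.orthogonal_orthogonal V, Submodule.mem_orthogonal]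
    intro q hq
    have hSq : adjoint S q ∈ Jᗮ := by
      rw [Submodule.mem_orthogonal]
      intro w hw
      rw [adjoint_inner_right]
      exact (Submodule.mem_orthogonal V q).mp hq _ ⟨⟨w, hw⟩, rfl⟩
    have hL : adjoint L q = adjoint W (adjoint S q) := by
      refine (neg_add_eq_zero.mp (h _ q ?_)).symm
      rw [map_neg, adjoint_apply_adjoint_apply_of_mem_orthogonal_ker hW hSq, neg_add_cancel]
    rw [sub_apply, inner_sub_right, comp_apply, ← adjoint_inner_left L, ← adjoint_inner_left S,
      ← adjoint_inner_left W, hL, sub_self]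
  obtain ⟨R, hR⟩ := HasRightInverse.of_surjective_of_finiteDimensional (f := SJ.rangeRestrict)
    (LinearMap.surjective_rangeRestrict (SJ : J →ₗ[𝕜] U))
  refine ⟨W + J.subtypeL ∘L R ∘L (L - S ∘L W).codRestrict V hmem, ?_, ?_⟩
  · ext x
    have hker : T (R ((L - S ∘L W).codRestrict V hmem x) : H) = 0 := (R _).2
    simp [comp_add, hW, hker]
  · ext x
    have hSR : S (R ((L - S ∘L W).codRestrict V hmem x)) = L x - S (W x) :=
      congr(($(hR ((L - S ∘L W).codRestrict V hmem x)) : U))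
    simp [comp_add, hSR]

end FiniteDimensional

theorem stmt_9_general
    {X : Type} [NormedAddCommGroup X] [InnerProductSpace ℂ X] [CompleteSpace X] [Nontrivial X]
    {U : Type} [NormedAddCommGroup U] [InnerProductSpace ℂ U] [CompleteSpace U]
    [FiniteDimensional ℂ U]
    (x1 x0 : ℕ → X) (u0 : ℕ → U)
    (Ξ1 Ξ0 : l2 →L[ℂ] X) (Υ0 : l2 →L[ℂ] U)
    (hΞ1 : IsSynthesis x1 Ξ1) (hΞ0 : IsSynthesis x0 Ξ0) (hΥ0 : IsSynthesis u0 Υ0)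
    (As : X →L[ℂ] X) (Bs : U →L[ℂ] X)
    (hgen : ∀ k : ℕ, x1 k = As (x0 k) + Bs (u0 k))
    (γ : ℝ) :
    -- (i)
    ((∃ (K : X →L[ℂ] U) (M : ℝ), 1 ≤ M ∧ ∀ (A : X →L[ℂ] X) (B : U →L[ℂ] X),
          (∀ k : ℕ, x1 k = A (x0 k) + B (u0 k)) →
          ∀ k : ℕ, ‖(A + B.comp K) ^ k‖ ≤ M * γ ^ k) ∧
      (∃ c : ℝ, 0 ≤ c ∧
        ((c ^ 2 : ℂ) • ((adjoint Ξ0 ∘L Ξ0) ^ 2) - adjoint Ξ0 ∘L Ξ0).IsPositive))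
    ↔
    -- (ii)
    (IsFrame x0 ∧
      ∃ Ξd : X →L[ℂ] l2, Ξ0 ∘L Ξd = ContinuousLinearMap.id ℂ X ∧
        ∃ M : ℝ, 1 ≤ M ∧ ∀ k : ℕ, ‖(Ξ1 ∘L Ξd) ^ k‖ ≤ M * γ ^ k) := by
  have hsol := comp_add_comp_eq_iff_of_isSynthesis hΞ1 hΞ0 hΥ0
  have hAsBs : As ∘L Ξ0 + Bs ∘L Υ0 = Ξ1 := (hsol As Bs).2 hgen
  simp_rw [← hsol]
  rw [hΞ0.isFrame_iff]
  constructor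
  · rintro ⟨⟨K, M, hM, hKM⟩, c, -, hpos⟩
    have hadj : ∀ p q, adjoint Ξ0 p + adjoint Υ0 q = 0 → p + adjoint K q = 0 :=
      fun p q => add_adjoint_eq_zero_of_forall_comp_add_comp_eq_zero fun Δ Γ =>
        add_comp_eq_zero_of_forall_norm_le (fun A B hAB => by simpa using hKM A B hAB 1) hAsBs
    have hinj : Function.Injective (adjoint Ξ0) := (injective_iff_map_eq_zero _).2 fun p hp => by
      simpa using hadj p 0 (by simp [hp])
    have hlow := sq_norm_le_of_denseRange (denseRange_of_injective_adjoint hinj)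
      ((isPositive_sq_smul_sq_sub_iff Ξ0 c).1 hpos)
    obtain ⟨W, hW⟩ := exists_comp_eq_id_of_sq_norm_le hlow
    obtain ⟨D, hD, hDK⟩ := exists_comp_eq_id_and_comp_eq hW hadj
    have hclosed : Ξ1 ∘L D = As + Bs ∘L K := by
      rw [← hAsBs, add_comp, comp_assoc, comp_assoc, hD, hDK, comp_id]
    exact ⟨⟨c, hlow⟩, D, hD, M, hM, hclosed ▸ hKM As Bs hAsBs⟩
  · rintro ⟨⟨c, hc⟩, D, hD, M, hM, hpow⟩
    refine ⟨⟨Υ0 ∘L D, M, hM, fun A B hAB => ?_⟩, |c|, abs_nonneg c,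
      (isPositive_sq_smul_sq_sub_iff Ξ0 |c|).2 fun w => ?_⟩
    · rwa [← comp_assoc, ← comp_id A, ← hD, ← comp_assoc, ← add_comp, hAB]
    · simpa [sq_abs] using hc (Ξ0 w)

theorem stmt_9
    {X : Type} [NormedAddCommGroup X] [InnerProductSpace ℂ X] [CompleteSpace X] [Nontrivial X]
    {U : Type} [NormedAddCommGroup U] [InnerProductSpace ℂ U] [CompleteSpace U] [Nontrivial U]
    [FiniteDimensional ℂ U]
    (x1 x0 : ℕ → X) (u0 : ℕ → U)
    (hx1B : Bessel x1) (hx0B : Bessel x0) (hu0B : Bessel u0)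
    (Ξ1 Ξ0 : l2 →L[ℂ] X) (Υ0 : l2 →L[ℂ] U)
    (hΞ1 : IsSynthesis x1 Ξ1) (hΞ0 : IsSynthesis x0 Ξ0) (hΥ0 : IsSynthesis u0 Υ0)
    (As : X →L[ℂ] X) (Bs : U →L[ℂ] X)
    (hgen : ∀ k : ℕ, x1 k = As (x0 k) + Bs (u0 k))
    (γ : ℝ) (hγ0 : 0 < γ) (hγ1 : γ < 1) :
    -- (i)
    ((∃ (K : X →L[ℂ] U) (M : ℝ), 1 ≤ M ∧ ∀ (A : X →L[ℂ] X) (B : U →L[ℂ] X),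
          (∀ k : ℕ, x1 k = A (x0 k) + B (u0 k)) →
          ∀ k : ℕ, ‖(A + B.comp K) ^ k‖ ≤ M * γ ^ k) ∧
      (∃ c : ℝ, 0 ≤ c ∧
        ((c ^ 2 : ℂ) • ((adjoint Ξ0 ∘L Ξ0) ^ 2) - adjoint Ξ0 ∘L Ξ0).IsPositive))
    ↔
    -- (ii)
    (IsFrame x0 ∧
      ∃ Ξd : X →L[ℂ] l2, Ξ0 ∘L Ξd = ContinuousLinearMap.id ℂ X ∧
        ∃ M : ℝ, 1 ≤ M ∧ ∀ k : ℕ, ‖(Ξ1 ∘L Ξd) ^ k‖ ≤ M * γ ^ k) :=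
  stmt_9_general x1 x0 u0 Ξ1 Ξ0 Υ0 hΞ1 hΞ0 hΥ0 As Bs hgen γ
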